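/- Let A₁,…,Aₙ be nonempty pairwise disjoint subsets of {1,…,N} and let 𝔄 = {K ⊆ {1,…,N} : ∃ i, Aᵢ ⊆ K} be the increasing event they generate. Then P(φ ∈ 𝔄 ∖ (𝔄∘𝔄)) = Σ_{i=1}^{n} P(A_j ⊄ φ for all j ≠ i) − n · P(φ ∉ 𝔄), where 𝔄∘𝔄 = {K : ∃ nonempty disjoint L, M ∈ 𝔄 with L ∪ M ⊆ K}, and consequently the inequality P(φ ∈ 𝔄∘𝔄) ≤ P(φ ∈ 𝔄)² is equivalent to (n + 1)·P(φ ∉ 𝔄) ≤ P(φ ∉ 𝔄)² + Σ_{i=1}^{n} P(A_j ⊄ φ for all j ≠ i). -/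

import Mathlib

open Matrix Finset

variable {p N : ℕ}

lemma det_mul_expand (A : Matrix (Fin p) (Fin N) ℝ) (B : Matrix (Fin N) (Fin p) ℝ) :
    det (A * B) = ∑ r : Fin p → Fin N,
      (∏ i, A i (r i)) * det (Matrix.of fun i j => B (r i) j) := by
  have h1 : det (A * B) = detRowAlternating (fun i => ∑ k, A i k • B k) := by
    congr 1
    ext i j
    simp [Matrix.mul_apply]
  rw [h1]
  have h2 := (detRowAlternating : (Fin p → ℝ) [⋀^Fin p]→ₗ[ℝ] ℝ).toMultilinearMap.map_sum
    (fun (i : Fin p) (k : Fin N) => A i k • B k)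
  simp only [AlternatingMap.coe_multilinearMap] at h2
  rw [h2]
  refine Finset.sum_congr rfl fun r _ => ?_
  have := (detRowAlternating : (Fin p → ℝ) [⋀^Fin p]→ₗ[ℝ] ℝ).toMultilinearMap.map_smul_univ
    (fun i => A i (r i)) (fun i => B (r i))
  rw [show det (Matrix.of fun i j => B (r i) j) = detRowAlternating (fun i => B (r i)) from rfl]
  simpa [detRowAlternating, smul_eq_mul] using this

noncomputable def monoOf (S : Finset (Fin N)) (hS : S.card = p) : Fin p → Fin N :=
  fun j => (S.orderIsoOfFin hS j : Fin N)

lemma monoOf_injective (S : Finset (Fin N)) (hS : S.card = p) :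
    Function.Injective (monoOf S hS) := fun a b h => by
  have := (S.orderIsoOfFin hS).injective (Subtype.ext h)
  exact this

lemma monoOf_image (S : Finset (Fin N)) (hS : S.card = p) :
    Finset.image (monoOf S hS) Finset.univ = S := by
  apply Finset.eq_of_subset_of_card_le
  · intro x hx
    simp only [Finset.mem_image] at hx
    obtain ⟨j, _, rfl⟩ := hx
    exact (S.orderIsoOfFin hS j).2
  · rw [Finset.card_image_of_injective _ (monoOf_injective S hS), hS, Finset.card_univ,
      Fintype.card_fin]


lemma F_zero_of_not_inj (A : Matrix (Fin p) (Fin N) ℝ) (B : Matrix (Fin N) (Fin p) ℝ)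
    (r : Fin p → Fin N) (h : ¬ Function.Injective r) :
    (∏ i, A i (r i)) * det (Matrix.of fun i j => B (r i) j) = 0 := by
  simp only [Function.Injective, not_forall] at h
  obtain ⟨a, b, hab, hne⟩ := h
  rw [Matrix.det_zero_of_row_eq hne (by ext j; simp [hab]), mul_zero]

theorem cauchyBinet (A : Matrix (Fin p) (Fin N) ℝ) (B : Matrix (Fin N) (Fin p) ℝ) :
    det (A * B) = ∑ S : Finset (Fin N),
      if h : S.card = p then
        det (Matrix.of fun i j => A i (monoOf S h j)) *
          det (Matrix.of fun i j => B (monoOf S h i) j)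
      else 0 := by
  classical
  rw [det_mul_expand]
  have hfib := Finset.sum_fiberwise_of_maps_to
    (s := (Finset.univ : Finset (Fin p → Fin N)))
    (t := (Finset.univ : Finset (Finset (Fin N))))
    (g := fun r => Finset.image r Finset.univ)
    (fun r _ => Finset.mem_univ _)
    (fun r => (∏ i, A i (r i)) * det (Matrix.of fun i j => B (r i) j))
  rw [← hfib]
  refine Finset.sum_congr rfl fun S _ => ?_
  by_cases h : S.card = p
  · rw [dif_pos h]
    -- the fiber consists of injective functions with image S
    have hinj : ∀ r ∈ Finset.univ.filter
        (fun r : Fin p → Fin N => Finset.image r Finset.univ = S),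
        Function.Injective r := by
      intro r hr
      rw [Finset.mem_filter] at hr
      have hcard : (Finset.image r Finset.univ).card = (Finset.univ : Finset (Fin p)).card := by
        rw [hr.2, h, Finset.card_univ, Fintype.card_fin]
      have := Finset.card_image_iff.mp hcard
      intro a b hab
      exact this (Finset.mem_coe.mpr (Finset.mem_univ a)) (Finset.mem_coe.mpr (Finset.mem_univ b)) hab
    have hfiber : (∑ r ∈ Finset.univ.filter
        (fun r : Fin p → Fin N => Finset.image r Finset.univ = S),
        (∏ i, A i (r i)) * det (Matrix.of fun i j => B (r i) j))
      = ∑ σ : Equiv.Perm (Fin p),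
        (∏ i, A i (monoOf S h (σ i))) * det (Matrix.of fun i j => B (monoOf S h (σ i)) j) := by
      refine (Finset.sum_bij (fun (σ : Equiv.Perm (Fin p)) (_ : σ ∈ Finset.univ) =>
          monoOf S h ∘ σ) ?_ ?_ ?_ ?_).symm
      · intro σ _
        rw [Finset.mem_filter]
        refine ⟨Finset.mem_univ _, ?_⟩
        have h1 : Finset.image (monoOf S h ∘ ⇑σ) Finset.univ
            = Finset.image (monoOf S h) (Finset.image (⇑σ) Finset.univ) :=
          (Finset.image_image).symm
        rw [h1, Finset.image_univ_equiv, monoOf_image]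
      · intro a _ b _ hab
        exact Equiv.ext fun i => monoOf_injective S h (congrFun hab i)
      · intro r hr
        have hrinj := hinj r hr
        rw [Finset.mem_filter] at hr
        have hmem : ∀ i, r i ∈ S := fun i => by
          rw [← hr.2]; exact Finset.mem_image_of_mem _ (Finset.mem_univ i)
        have hbij : Function.Bijective (fun i : Fin p => (⟨r i, hmem i⟩ : S)) := by
          rw [Fintype.bijective_iff_injective_and_card]
          constructor
          · intro a b hab
            exact hrinj (congrArg Subtype.val hab)
          · simp [Fintype.card_coe, h]
        refine ⟨(Equiv.ofBijective _ hbij).trans (S.orderIsoOfFin h).toEquiv.symm,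
          Finset.mem_univ _, funext fun i => ?_⟩
        show monoOf S h ((S.orderIsoOfFin h).toEquiv.symm (Equiv.ofBijective _ hbij i)) = r i
        unfold monoOf
        rw [show (S.orderIsoOfFin h) ((S.orderIsoOfFin h).toEquiv.symm (Equiv.ofBijective _ hbij i))
            = Equiv.ofBijective _ hbij i from (S.orderIsoOfFin h).apply_symm_apply _]
        rfl
      · intro σ _
        rfl
    rw [hfiber]
    have hBperm : ∀ σ : Equiv.Perm (Fin p),
        det (Matrix.of fun i j => B (monoOf S h (σ i)) j)
          = (Equiv.Perm.sign σ : ℝ) * det (Matrix.of fun i j => B (monoOf S h i) j) := by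
      intro σ
      have := Matrix.det_permute σ (Matrix.of fun i j => B (monoOf S h i) j)
      simpa [Matrix.submatrix] using this
    have hA : det (Matrix.of fun i j => A i (monoOf S h j))
        = ∑ σ : Equiv.Perm (Fin p), (Equiv.Perm.sign σ : ℝ) * ∏ i, A i (monoOf S h (σ i)) := by
      rw [← Matrix.det_transpose, Matrix.det_apply']
      refine Finset.sum_congr rfl fun σ _ => ?_
      simp [Matrix.transpose]
    rw [hA, Finset.sum_mul]
    refine Finset.sum_congr rfl fun σ _ => ?_
    rw [hBperm σ]
    ring
  · rw [dif_neg h]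
    refine Finset.sum_eq_zero fun r hr => ?_
    rw [Finset.mem_filter] at hr
    refine F_zero_of_not_inj A B r fun hrinj => h ?_
    rw [← hr.2, Finset.card_image_of_injective _ hrinj, Finset.card_univ, Fintype.card_fin]

open Matrix

/-- Squared determinant of the submatrix of `Z` formed by the columns indexed by `S`,
when `S` has exactly `q` elements; `0` otherwise. -/
noncomputable def detSq {q N : ℕ} (Z : Matrix (Fin q) (Fin N) ℝ) (S : Finset (Fin N)) : ℝ :=
  if h : S.card = q then
    (Matrix.det (Matrix.of fun i j : Fin q => Z i ((S.orderIsoOfFin h j : Fin N)))) ^ 2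
  else 0

open scoped Classical in
/-- `prDP Z E` is the probability that the determinantal process associated to the
matrix `Z` (with orthonormal rows) belongs to the family `E` of subsets of `{1,…,N}`:
`P(φ(Z) ∈ E) = Σ_{|S| = q, S ∈ E} det(Z_S)²`. -/
noncomputable def prDP {q N : ℕ} (Z : Matrix (Fin q) (Fin N) ℝ)
    (E : Set (Finset (Fin N))) : ℝ :=
  ∑ S : Finset (Fin N), if S ∈ E then detSq Z S else 0


/-- The disjoint intersection 𝔄∘𝔅 of two events. -/
def disjInt {N : ℕ} (A B : Set (Finset (Fin N))) : Set (Finset (Fin N)) :=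
  {K | ∃ L M : Finset (Fin N),
    L ∈ A ∧ M ∈ B ∧ L.Nonempty ∧ M.Nonempty ∧ Disjoint L M ∧ L ∪ M ⊆ K}

lemma detSq_total {Z : Matrix (Fin p) (Fin N) ℝ} (hZ : Z * Zᵀ = 1) :
    ∑ S : Finset (Fin N), detSq Z S = 1 := by
  have hcb := cauchyBinet Z Zᵀ
  rw [hZ, Matrix.det_one] at hcb
  rw [hcb]
  refine Finset.sum_congr rfl fun S _ => ?_
  unfold detSq
  by_cases h : S.card = p
  · rw [dif_pos h, dif_pos h]
    have hB : det (Matrix.of fun i j => Zᵀ (monoOf S h i) j)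
        = det (Matrix.of fun (i j : Fin p) => Z i ((S.orderIsoOfFin h j : Fin N))) := by
      rw [← Matrix.det_transpose]
      rfl
    have hA : det (Matrix.of fun i j => Z i (monoOf S h j))
        = det (Matrix.of fun (i j : Fin p) => Z i ((S.orderIsoOfFin h j : Fin N))) := rfl
    rw [hA, hB, sq]
  · rw [dif_neg h, dif_neg h]

open scoped Classical

lemma prDP_compl_total {Z : Matrix (Fin p) (Fin N) ℝ} (hZ : Z * Zᵀ = 1)
    (E : Set (Finset (Fin N))) : prDP Z E + prDP Z Eᶜ = 1 := by
  rw [← detSq_total hZ]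
  unfold prDP
  rw [← Finset.sum_add_distrib]
  refine Finset.sum_congr rfl fun S _ => ?_
  by_cases h : S ∈ E
  · rw [if_pos h, if_neg (by simpa using h), add_zero]
  · rw [if_neg h, if_pos (by simpa using h), zero_add]

lemma prDP_diff_add {q N : ℕ} (Z : Matrix (Fin q) (Fin N) ℝ)
    {D E : Set (Finset (Fin N))} (hDE : D ⊆ E) :
    prDP Z (E \ D) + prDP Z D = prDP Z E := by
  unfold prDP
  rw [← Finset.sum_add_distrib]
  refine Finset.sum_congr rfl fun S _ => ?_
  by_cases hD : S ∈ D
  · rw [if_neg (fun hc => hc.2 hD), if_pos hD, if_pos (hDE hD), zero_add]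
  · rw [if_neg hD, add_zero]
    by_cases hE : S ∈ E
    · rw [if_pos ⟨hE, hD⟩, if_pos hE]
    · rw [if_neg (fun hc => hE hc.1), if_neg hE]

/-- for the increasing event 𝔄 generated by nonempty pairwise disjoint sets
A₁,…,Aₙ, P(φ ∈ 𝔄 ∖ (𝔄∘𝔄)) = Σᵢ P(A_j ⊄ φ ∀ j ≠ i) − n · P(φ ∉ 𝔄), and consequently
P(φ ∈ 𝔄∘𝔄) ≤ P(φ ∈ 𝔄)² is equivalent to
(n + 1) · P(φ ∉ 𝔄) ≤ P(φ ∉ 𝔄)² + Σᵢ P(A_j ⊄ φ ∀ j ≠ i). -/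
theorem bk_self_disjoint_generators {N p n : ℕ} (hp : 1 < p) (hpN : p < N)
    (Z : Matrix (Fin p) (Fin N) ℝ) (hZ : Z * Zᵀ = 1)
    (A : Fin n → Finset (Fin N)) (hne : ∀ i, (A i).Nonempty)
    (hdisj : ∀ i j, i ≠ j → Disjoint (A i) (A j)) :
    prDP Z ({K | ∃ i, A i ⊆ K} \ disjInt {K | ∃ i, A i ⊆ K} {K | ∃ i, A i ⊆ K})
        = (∑ i : Fin n, prDP Z {S | ∀ j, j ≠ i → ¬ A j ⊆ S})
            - n * prDP Z {K | ∃ i, A i ⊆ K}ᶜ ∧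
      (prDP Z (disjInt {K | ∃ i, A i ⊆ K} {K | ∃ i, A i ⊆ K})
          ≤ prDP Z {K | ∃ i, A i ⊆ K} ^ 2 ↔
        ((n : ℝ) + 1) * prDP Z {K | ∃ i, A i ⊆ K}ᶜ
          ≤ prDP Z {K | ∃ i, A i ⊆ K}ᶜ ^ 2
            + ∑ i : Fin n, prDP Z {S | ∀ j, j ≠ i → ¬ A j ⊆ S}) := by
  set 𝔄 : Set (Finset (Fin N)) := {K | ∃ i, A i ⊆ K} with h𝔄
  set DI : Set (Finset (Fin N)) := disjInt 𝔄 𝔄 with hDI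
  -- characterize membership in DI
  have hDI_iff : ∀ S : Finset (Fin N),
      S ∈ DI ↔ ∃ i j, i ≠ j ∧ A i ⊆ S ∧ A j ⊆ S := by
    intro S
    constructor
    · rintro ⟨L, M, ⟨i, hiL⟩, ⟨j, hjM⟩, hLne, hMne, hLM, hsub⟩
      refine ⟨i, j, ?_, hiL.trans ((Finset.subset_union_left).trans hsub),
        hjM.trans ((Finset.subset_union_right).trans hsub)⟩
      rintro rfl
      exact (hne i).ne_empty (disjoint_self.mp (hLM.mono hiL hjM))
    · rintro ⟨i, j, hij, hiS, hjS⟩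
      exact ⟨A i, A j, ⟨i, le_rfl⟩, ⟨j, le_rfl⟩, hne i, hne j, hdisj i j hij,
        Finset.union_subset hiS hjS⟩
  have hDIsub : DI ⊆ 𝔄 := by
    rintro S ⟨L, M, ⟨i, hiL⟩, -, -, -, -, hsub⟩
    exact ⟨i, hiL.trans ((Finset.subset_union_left).trans hsub)⟩
  -- the key pointwise identity
  have key : ∀ S : Finset (Fin N),
      (@ite ℝ (S ∈ 𝔄 \ DI) (Classical.propDecidable _) (detSq Z S) 0)
        = (∑ i : Fin n, @ite ℝ (S ∈ {T : Finset (Fin N) | ∀ j, j ≠ i → ¬ A j ⊆ T})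
            (Classical.propDecidable _) (detSq Z S) 0)
          - n * (@ite ℝ (S ∈ 𝔄ᶜ) (Classical.propDecidable _) (detSq Z S) 0) := by
    intro S
    by_cases hex : ∃ i, A i ⊆ S
    · have hAmem : S ∈ 𝔄 := hex
      rw [if_neg (by simpa using hAmem : ¬ S ∈ 𝔄ᶜ), mul_zero, sub_zero]
      by_cases h2 : ∃ i j, i ≠ j ∧ A i ⊆ S ∧ A j ⊆ S
      · rw [if_neg (fun hc => hc.2 ((hDI_iff S).mpr h2))]
        refine (Finset.sum_eq_zero fun i _ => ?_).symm
        rw [if_neg]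
        intro hall
        obtain ⟨a, b, hab, haS, hbS⟩ := h2
        rcases eq_or_ne a i with rfl | ha
        · exact hall b (Ne.symm hab) hbS
        · exact hall a ha haS
      · obtain ⟨i₀, hi₀⟩ := hex
        have huniq : ∀ j, A j ⊆ S → j = i₀ := fun j hj => by
          by_contra hne'
          exact h2 ⟨j, i₀, hne', hj, hi₀⟩
        rw [if_pos ⟨hAmem, fun hc => h2 ((hDI_iff S).mp hc)⟩]
        rw [Finset.sum_eq_single i₀]
        · rw [if_pos]
          intro j hj hjS
          exact hj (huniq j hjS)
        · intro i _ hi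
          rw [if_neg]
          intro hall
          exact hall i₀ (Ne.symm hi) hi₀
        · intro h
          exact absurd (Finset.mem_univ i₀) h
    · rw [if_neg (fun hc => hex hc.1), if_pos (show S ∈ 𝔄ᶜ from hex)]
      have : ∀ i : Fin n, (@ite ℝ (S ∈ {T : Finset (Fin N) | ∀ j, j ≠ i → ¬ A j ⊆ T})
          (Classical.propDecidable _) (detSq Z S) 0) = detSq Z S := fun i =>
        if_pos (fun j _ hj => hex ⟨j, hj⟩)
      rw [Finset.sum_congr rfl fun i _ => this i, Finset.sum_const, Finset.card_univ,
        Fintype.card_fin, nsmul_eq_mul, sub_self]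
  -- first conjunct
  have h1 : prDP Z (𝔄 \ DI)
      = (∑ i : Fin n, prDP Z {S | ∀ j, j ≠ i → ¬ A j ⊆ S}) - n * prDP Z 𝔄ᶜ := by
    unfold prDP
    rw [Finset.sum_comm, Finset.mul_sum, ← Finset.sum_sub_distrib]
    exact Finset.sum_congr rfl fun S _ => key S
  have h2 : prDP Z 𝔄 + prDP Z 𝔄ᶜ = 1 := prDP_compl_total hZ 𝔄
  have h3 : prDP Z (𝔄 \ DI) + prDP Z DI = prDP Z 𝔄 := prDP_diff_add Z hDIsub
  refine ⟨h1, ?_⟩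
  set a := prDP Z 𝔄
  set q := prDP Z 𝔄ᶜ
  set s := ∑ i : Fin n, prDP Z {S | ∀ j, j ≠ i → ¬ A j ⊆ S}
  set d := prDP Z DI
  have ha : a = 1 - q := by linarith
  have hsq : a ^ 2 = 1 - 2 * q + q ^ 2 := by rw [ha]; ring
  constructor
  · intro h; nlinarith [h1, h3]
  · intro h; nlinarith [h1, h3]
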